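/- Every Cantor normal form that is neither zero nor a successor is the limit of a strictly increasing ℕ-indexed sequence of CNFs: there exists a strictly increasing sequence s : ℕ → Cnf such that the given CNF is the least upper bound of s. -/

import Mathlib

/-- Unlabelled binary trees. -/
inductive T : Type
  | zero : T
  | node : T → T → T

/-- The hereditary lexicographical order on binary trees. -/
inductive tlt : T → T → Prop
  | z {a b : T} : tlt T.zero (T.node a b)
  | l {a b c d : T} : tlt a c → tlt (T.node a b) (T.node c d)
  | r {a b d : T} : tlt b d → tlt (T.node a b) (T.node a d)

/-- The reflexive closure of `tlt`. -/
def tle (s t : T) : Prop := tlt s t ∨ s = t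

/-- The left subtree, if it exists. -/
def left : T → T
  | T.zero => T.zero
  | T.node a _ => a

/-- The Cantor normal form predicate. -/
inductive isCNF : T → Prop
  | z : isCNF T.zero
  | n {s t : T} : isCNF s → isCNF t → tle (left t) s → isCNF (T.node s t)

open Classical in
/-- Addition of Cantor normal forms. -/
noncomputable def tadd : T → T → T
  | T.zero, b => b
  | a, T.zero => a
  | T.node a c, T.node b d =>
      if tlt a b then T.node b d else T.node a (tadd c (T.node b d))

/-!
Only leastness needs an argument. For `ω^(c+1)`, with sequence `ω^c · i`: a CNF below
`ω^(c+1)` has leading exponent at most `c`, hence lies below some `ω^c · i`. For `ω^a` and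
`ω^a + b`, an upper bound of the sequence has leading exponent at least that of its terms
(and, in the critical case of `ω^a + b`, exactly `a`), so the leastness of the fundamental
sequence of `a` (respectively of `b`) transfers along the lexicographic order.
-/

theorem not_tlt_zero {t : T} : ¬ tlt t T.zero := nofun

theorem tlt_irrefl : ∀ {a : T}, ¬ tlt a a
  | T.zero, h => nomatch h
  | T.node _ _, .l h => tlt_irrefl h
  | T.node _ _, .r h => tlt_irrefl h

theorem tlt_trans {a b c : T} (hab : tlt a b) (hbc : tlt b c) : tlt a c := by
  induction hbc generalizing a with
  | z => exact absurd hab not_tlt_zero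
  | l hac ih =>
    cases hab with
    | z => exact tlt.z
    | l h => exact tlt.l (ih h)
    | r => exact tlt.l hac
  | r _ ih =>
    cases hab with
    | z => exact tlt.z
    | l h => exact tlt.l h
    | r h => exact tlt.r (ih h)

theorem tlt_trichotomy : ∀ a b : T, tlt a b ∨ a = b ∨ tlt b a
  | T.zero, T.zero => .inr (.inl rfl)
  | T.zero, T.node _ _ => .inl tlt.z
  | T.node _ _, T.zero => .inr (.inr tlt.z)
  | T.node a₁ a₂, T.node b₁ b₂ => by
    rcases tlt_trichotomy a₁ b₁ with h | rfl | h
    · exact .inl (tlt.l h)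
    · rcases tlt_trichotomy a₂ b₂ with h | rfl | h
      · exact .inl (tlt.r h)
      · exact .inr (.inl rfl)
      · exact .inr (.inr (tlt.r h))
    · exact .inr (.inr (tlt.l h))

theorem zero_tle : ∀ t : T, tle T.zero t
  | T.zero => .inr rfl
  | T.node _ _ => .inl tlt.z

theorem tle_trans {a b c : T} (hab : tle a b) (hbc : tle b c) : tle a c := by
  rcases hab with hab | rfl
  · rcases hbc with hbc | rfl
    · exact .inl (tlt_trans hab hbc)
    · exact .inl hab
  · exact hbc

theorem not_tle_of_tlt {a b : T} (h : tlt a b) : ¬ tle b a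
  | .inl h' => tlt_irrefl (tlt_trans h h')
  | .inr rfl => tlt_irrefl h

theorem tle_of_not_tlt {a b : T} (h : ¬ tlt b a) : tle a b := by
  rcases tlt_trichotomy a b with h' | h' | h'
  · exact .inl h'
  · exact .inr h'
  · exact absurd h' h

theorem left_tle_left {s t : T} : tle s t → tle (left s) (left t)
  | .inl tlt.z => zero_tle _
  | .inl (tlt.l h) => .inl h
  | .inl (tlt.r _) => .inr rfl
  | .inr rfl => .inr rfl

theorem node_tle_node_left {a c : T} (b : T) (h : tle a c) : tle (T.node a b) (T.node c b) :=
  h.imp tlt.l (congrArg (T.node · b))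

theorem node_tle_node_right (a : T) {b d : T} (h : tle b d) : tle (T.node a b) (T.node a d) :=
  h.imp tlt.r (congrArg (T.node a))

theorem not_node_tle_zero {a b : T} : ¬ tle (T.node a b) T.zero
  | .inl h => not_tlt_zero h
  | .inr h => T.noConfusion h

theorem tle_of_node_tle_node {a b d : T} : tle (T.node a b) (T.node a d) → tle b d
  | .inl (tlt.l h) => absurd h tlt_irrefl
  | .inl (tlt.r h) => .inl h
  | .inr h => .inr (T.node.inj h).2

theorem tadd_zero_one : tadd T.zero (T.node T.zero T.zero) = T.node T.zero T.zero := rfl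

theorem tadd_node_one (a y : T) :
    tadd (T.node a y) (T.node T.zero T.zero) = T.node a (tadd y (T.node T.zero T.zero)) := by
  simp [tadd, not_tlt_zero]

theorem tlt_tadd_one : ∀ c : T, tlt c (tadd c (T.node T.zero T.zero))
  | T.zero => tlt.z
  | T.node u v => by
    rw [tadd_node_one]
    exact tlt.r (tlt_tadd_one v)

theorem tle_of_tlt_tadd_one : ∀ {c p : T}, tlt p (tadd c (T.node T.zero T.zero)) → tle p c
  | T.zero, _, tlt.z => .inr rfl
  | T.zero, _, tlt.l h => absurd h not_tlt_zero
  | T.zero, _, tlt.r h => absurd h not_tlt_zero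
  | T.node u v, p, h => by
    rw [tadd_node_one] at h
    cases h with
    | z => exact .inl tlt.z
    | l h => exact .inl (tlt.l h)
    | r h => exact node_tle_node_right u (tle_of_tlt_tadd_one h)

theorem left_tle_left_tadd_one : ∀ y : T, tle (left y) (left (tadd y (T.node T.zero T.zero)))
  | T.zero => zero_tle _
  | T.node a y => by rw [tadd_node_one]; exact .inr rfl

def IsSucc (x : T) : Prop := ∃ y, isCNF y ∧ x = tadd y (T.node T.zero T.zero)

theorem ne_zero_of_not_isSucc_node_zero {a : T} (h : ¬ IsSucc (T.node a T.zero)) : a ≠ T.zero := by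
  rintro rfl
  exact h ⟨T.zero, isCNF.z, tadd_zero_one.symm⟩

theorem not_isSucc_of_not_isSucc_node {a b : T} (ha : isCNF a) (hab : tle (left b) a)
    (h : ¬ IsSucc (T.node a b)) : ¬ IsSucc b := by
  rintro ⟨y, hy, rfl⟩
  exact h ⟨T.node a y, isCNF.n ha hy (tle_trans (left_tle_left_tadd_one y) hab),
    (tadd_node_one a y).symm⟩

structure IsFundamentalSeq (s : ℕ → T) (x : T) : Prop where
  cnf : ∀ i, isCNF (s i)
  tlt_succ : ∀ i, tlt (s i) (s (i + 1))
  upperBound : ∀ i, tle (s i) x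
  least : ∀ b, isCNF b → (∀ i, tle (s i) b) → tle x b

/-- `omegaPowMul c i` is `ω^c · i`. -/
def omegaPowMul (c : T) : ℕ → T
  | 0 => T.zero
  | i + 1 => T.node c (omegaPowMul c i)

theorem left_omegaPowMul_tle (c : T) : ∀ i, tle (left (omegaPowMul c i)) c
  | 0 => zero_tle c
  | _ + 1 => .inr rfl

theorem isCNF_omegaPowMul {c : T} (hc : isCNF c) : ∀ i, isCNF (omegaPowMul c i)
  | 0 => isCNF.z
  | i + 1 => isCNF.n hc (isCNF_omegaPowMul hc i) (left_omegaPowMul_tle c i)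

theorem omegaPowMul_tlt_succ (c : T) : ∀ i, tlt (omegaPowMul c i) (omegaPowMul c (i + 1))
  | 0 => tlt.z
  | i + 1 => tlt.r (omegaPowMul_tlt_succ c i)

theorem exists_tlt_omegaPowMul {c t : T} (ht : isCNF t) (htc : tle (left t) c) :
    ∃ i, tlt t (omegaPowMul c i) := by
  induction ht with
  | z => exact ⟨1, tlt.z⟩
  | @n s q _ _ hqs _ ihq =>
    obtain ⟨i, hi⟩ := ihq (tle_trans hqs htc)
    refine ⟨i + 1, ?_⟩
    rcases htc with h | rfl
    · exact tlt.l h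
    · exact tlt.r hi

theorem isFundamentalSeq_omegaPowMul {c : T} (hc : isCNF c) :
    IsFundamentalSeq (omegaPowMul c) (T.node (tadd c (T.node T.zero T.zero)) T.zero) where
  cnf := isCNF_omegaPowMul hc
  tlt_succ := omegaPowMul_tlt_succ c
  upperBound
    | 0 => zero_tle _
    | _ + 1 => .inl (tlt.l (tlt_tadd_one c))
  least b hb hub := by
    refine tle_of_not_tlt fun hlt => ?_
    cases hlt with
    | z => exact not_node_tle_zero (hub 1)
    | l h =>
      obtain ⟨i, hi⟩ := exists_tlt_omegaPowMul hb (tle_of_tlt_tadd_one h)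
      exact not_tle_of_tlt hi (hub i)
    | r h => exact not_tlt_zero h

theorem IsFundamentalSeq.node_zero {r : ℕ → T} {a : T} (hr : IsFundamentalSeq r a) :
    IsFundamentalSeq (fun i => T.node (r i) T.zero) (T.node a T.zero) where
  cnf i := isCNF.n (hr.cnf i) isCNF.z (zero_tle _)
  tlt_succ i := tlt.l (hr.tlt_succ i)
  upperBound i := node_tle_node_left _ (hr.upperBound i)
  least
    | T.zero, _, hub => absurd (hub 0) not_node_tle_zero
    | T.node p q, .n hp _ _, hub =>
      have hap : tle a p := hr.least p hp fun i => left_tle_left (hub i)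
      tle_trans (node_tle_node_left _ hap) (node_tle_node_right p (zero_tle q))

theorem IsFundamentalSeq.node {r : ℕ → T} {a b : T} (ha : isCNF a) (hba : tle (left b) a)
    (hr : IsFundamentalSeq r b) : IsFundamentalSeq (fun i => T.node a (r i)) (T.node a b) where
  cnf i := isCNF.n ha (hr.cnf i) (tle_trans (left_tle_left (hr.upperBound i)) hba)
  tlt_succ i := tlt.r (hr.tlt_succ i)
  upperBound i := node_tle_node_right a (hr.upperBound i)
  least
    | T.zero, _, hub => absurd (hub 0) not_node_tle_zero
    | T.node p q, .n _ hq _, hub => by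
      rcases left_tle_left (hub 0) with hap | rfl
      · exact .inl (tlt.l hap)
      · exact node_tle_node_right a (hr.least q hq fun i => tle_of_node_tle_node (hub i))

theorem exists_isFundamentalSeq {x : T} (hx : isCNF x) (hx0 : x ≠ T.zero) (hns : ¬ IsSucc x) :
    ∃ s, IsFundamentalSeq s x := by
  induction hx with
  | z => exact absurd rfl hx0
  | @n a b ha _ hba iha ihb =>
    cases b with
    | zero =>
      by_cases hsa : IsSucc a
      · obtain ⟨c, hc, rfl⟩ := hsa
        exact ⟨_, isFundamentalSeq_omegaPowMul hc⟩
      · obtain ⟨r, hr⟩ := iha (ne_zero_of_not_isSucc_node_zero hns) hsa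
        exact ⟨_, hr.node_zero⟩
    | node =>
      obtain ⟨r, hr⟩ := ihb T.noConfusion (not_isSucc_of_not_isSucc_node ha hba hns)
      exact ⟨_, hr.node ha hba⟩

/-- A CNF which is neither zero nor a successor is the least upper bound of a
strictly increasing sequence of CNFs. -/
theorem cnf_limit_has_fundamental_sequence :
    ∀ x : T, isCNF x → x ≠ T.zero →
      (¬ ∃ y : T, isCNF y ∧ x = tadd y (T.node T.zero T.zero)) →
      ∃ s : ℕ → T,
        (∀ i, isCNF (s i)) ∧
        (∀ i, tlt (s i) (s (i + 1))) ∧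
        (∀ i, tle (s i) x) ∧
        (∀ b : T, isCNF b → (∀ i, tle (s i) b) → tle x b) := by
  intro x hx hx0 hns
  obtain ⟨s, hs⟩ := exists_isFundamentalSeq hx hx0 hns
  exact ⟨s, hs.cnf, hs.tlt_succ, hs.upperBound, hs.least⟩
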